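/- Monotonicity under the Abelian framework: with a fixed stack of instructions, if a finite legal sequence α is legal for configuration η and η' ≥ η pointwise, then α is also legal for η', and the odometer (number of topplings at each site) needed to stabilize η' is at least that needed to stabilize η. -/
import Mathlib


variable {V : Type*} [DecidableEq V]

structure ChipState (V : Type*) where
  config : V → ℕ
  count : V → ℕ

/-- Topple at `x`: move one particle from `x` along the next unused instruction. -/
def topple (ξ : V → ℕ → V) (s : ChipState V) (x : V) : ChipState V where
  config := fun y =>
    (s.config y - (if y = x then 1 else 0)) + (if y = ξ x (s.count x) then 1 else 0)
  count := fun y => s.count y + (if y = x then 1 else 0)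

def run (ξ : V → ℕ → V) : List V → ChipState V → ChipState V
  | [], s => s
  | x :: rest, s => run ξ rest (topple ξ s x)

def Legal (ξ : V → ℕ → V) : List V → ChipState V → Prop
  | [], _ => True
  | x :: rest, s => 2 ≤ s.config x ∧ Legal ξ rest (topple ξ s x)

def Stable (η : V → ℕ) : Prop := ∀ x, η x ≤ 1

lemma topple_comm (ξ : V → ℕ → V) (s : ChipState V) (a b : V)
    (ha : 1 ≤ s.config a) (hb : 1 ≤ s.config b) :
    topple ξ (topple ξ s a) b = topple ξ (topple ξ s b) a := by
  by_cases hab : a = b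
  · subst hab; rfl
  · have hcnt : (topple ξ s a).count b = s.count b := by
      simp [topple, if_neg (Ne.symm hab ·)]
    have hcnt' : (topple ξ s b).count a = s.count a := by
      simp [topple, if_neg (hab ·)]
    cases s with
    | mk c n =>
      simp only [topple] at *
      congr 1 <;> funext y <;>
      · simp only [hcnt, hcnt'] at *
        rcases eq_or_ne y a with rfl | hya <;> rcases eq_or_ne y b with rfl | hyb <;>
          simp_all <;> split_ifs <;> omega

lemma topple_config_le (ξ : V → ℕ → V) (s : ChipState V) (a x : V) (hax : x ≠ a) :
    s.config x ≤ (topple ξ s a).config x := by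
  simp only [topple]
  rw [if_neg hax]
  split_ifs <;> omega

lemma run_config_ge (ξ : V → ℕ → V) (β : List V) (x : V) :
    ∀ s : ChipState V, x ∉ β → s.config x ≤ (run ξ β s).config x := by
  induction β with
  | nil => intro s _; exact le_rfl
  | cons a rest ih =>
    intro s hx
    simp only [List.mem_cons, not_or] at hx
    exact (topple_config_le ξ s a x hx.1).trans (ih _ hx.2)

omit [DecidableEq V] in
lemma exists_first_split {x : V} {l : List V} (h : x ∈ l) :
    ∃ γ δ : List V, l = γ ++ x :: δ ∧ x ∉ γ := by
  induction l with
  | nil => cases h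
  | cons a rest ih =>
    rcases eq_or_ne x a with rfl | hxa
    · exact ⟨[], rest, rfl, by simp⟩
    · have : x ∈ rest := by
        rcases List.mem_cons.mp h with h | h
        · exact absurd h hxa
        · exact h
      obtain ⟨γ, δ, h1, h2⟩ := ih this
      exact ⟨a :: γ, δ, by simp [h1], by simp [hxa, h2]⟩

lemma move_front (ξ : V → ℕ → V) (x : V) :
    ∀ (γ δ : List V) (s : ChipState V), x ∉ γ → 2 ≤ s.config x →
      Legal ξ (γ ++ x :: δ) s →
      Legal ξ (x :: (γ ++ δ)) s ∧
        run ξ (γ ++ x :: δ) s = run ξ (x :: (γ ++ δ)) s := by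
  intro γ
  induction γ with
  | nil => intro δ s _ _ h; exact ⟨h, rfl⟩
  | cons a γ' ih =>
    intro δ s hx hsx hleg
    have hxa : x ≠ a := by simp at hx; exact fun h => hx.1 h
    obtain ⟨ha, hleg'⟩ := hleg
    have hsx' : 2 ≤ (topple ξ s a).config x :=
      hsx.trans (topple_config_le ξ s a x hxa)
    have hx' : x ∉ γ' := by simp at hx; exact hx.2
    obtain ⟨hleg2, hrun2⟩ := ih δ (topple ξ s a) hx' hsx' hleg'
    -- hleg2 : Legal ξ (x :: (γ' ++ δ)) (topple ξ s a)
    obtain ⟨_, hleg3⟩ := hleg2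
    have hcomm := topple_comm ξ s a x (by omega) (by omega)
    have hax2 : 2 ≤ (topple ξ s x).config a :=
      ha.trans (topple_config_le ξ s x a (Ne.symm hxa))
    constructor
    · exact ⟨hsx, hax2, by rw [← hcomm]; exact hleg3⟩
    · show run ξ (γ' ++ x :: δ) (topple ξ s a) = run ξ (a :: (γ' ++ δ)) (topple ξ s x)
      rw [hrun2]
      show run ξ (γ' ++ δ) (topple ξ (topple ξ s a) x)
        = run ξ (γ' ++ δ) (topple ξ (topple ξ s x) a)
      rw [hcomm]

lemma legal_mono (ξ : V → ℕ → V) (α : List V) :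
    ∀ s s' : ChipState V, (∀ x, s.config x ≤ s'.config x) → s.count = s'.count →
      Legal ξ α s → Legal ξ α s' := by
  induction α with
  | nil => intro _ _ _ _ _; trivial
  | cons a rest ih =>
    intro s s' hc hn ⟨ha, hleg⟩
    refine ⟨ha.trans (hc a), ih _ _ ?_ ?_ hleg⟩
    · intro x
      simp only [topple, hn]
      have := hc x
      split_ifs <;> omega
    · funext y; simp [topple, hn]

lemma key (ξ : V → ℕ → V) (β : List V) :
    ∀ (β' : List V) (s s' : ChipState V),
      (∀ x, s.config x ≤ s'.config x) → s.count = s'.count →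
      Legal ξ β s → Legal ξ β' s' → Stable (run ξ β' s').config →
      ∀ x, β.count x ≤ β'.count x := by
  induction β with
  | nil => intro _ _ _ _ _ _ _ _ x; simp
  | cons a rest ih =>
    intro β' s s' hc hn ⟨ha, hleg⟩ hleg' hstab x
    have ha' : 2 ≤ s'.config a := ha.trans (hc a)
    have hmem : a ∈ β' := by
      by_contra hmem
      have := run_config_ge ξ β' a s' hmem
      have := hstab a
      omega
    obtain ⟨γ, δ, rfl, hγ⟩ := exists_first_split hmem
    obtain ⟨hleg2, hrun2⟩ := move_front ξ a γ δ s' hγ ha' hleg'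
    obtain ⟨_, hleg3⟩ := hleg2
    have hstab2 : Stable (run ξ (γ ++ δ) (topple ξ s' a)).config := by
      rw [hrun2] at hstab; exact hstab
    have hcount : rest.count x ≤ (γ ++ δ).count x := by
      refine ih (γ ++ δ) (topple ξ s a) (topple ξ s' a) ?_ ?_ hleg hleg3 hstab2 x
      · intro y
        simp only [topple, hn]
        have := hc y
        split_ifs <;> omega
      · funext y; simp [topple, hn]
    have hperm : (γ ++ a :: δ).count x = (a :: (γ ++ δ)).count x := by
      simp [List.count_append, List.count_cons]
      omega
    rw [hperm]
    simp only [List.count_cons]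
    omega


/-- monotonicity: with a fixed stack of instructions `ξ`, if the finite
sequence `α` is legal for `η` and `η ≤ η'` pointwise, then `α` is legal for `η'`;
moreover the odometer of `η'` dominates that of `η`: any legal stabilising sequence
for `η'` topples each site at least as many times as any legal stabilising sequence
for `η`. -/
theorem stmt9 (ξ : V → ℕ → V) (η η' : V → ℕ) (hle : ∀ x, η x ≤ η' x)
    (α : List V) (hα : Legal ξ α ⟨η, fun _ => 0⟩) :
    Legal ξ α ⟨η', fun _ => 0⟩ ∧
      ∀ β β' : List V,
        Legal ξ β ⟨η, fun _ => 0⟩ → Stable (run ξ β ⟨η, fun _ => 0⟩).config →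
        Legal ξ β' ⟨η', fun _ => 0⟩ → Stable (run ξ β' ⟨η', fun _ => 0⟩).config →
        ∀ x, β.count x ≤ β'.count x := by
  refine ⟨legal_mono ξ α ⟨η, fun _ => 0⟩ ⟨η', fun _ => 0⟩ hle rfl hα, ?_⟩
  intro β β' hβ _ hβ' hstab' x
  exact key ξ β β' ⟨η, fun _ => 0⟩ ⟨η', fun _ => 0⟩ hle rfl hβ hβ' hstab' x
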